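/- Let p ≥ 2 and let ℓ_1 ≥ ℓ_2 ≥ ⋯ ≥ ℓ_p ≥ 2 be even integers; set δ = Σ_{i=1}^p ℓ_i/2 and s_j = Σ_{i=1}^j ℓ_i for j ∈ [p]. If n > max{ 3δ − 1, (δ/2)(1 + (ℓ_1 − 2)/(2δ − ℓ_1)) }, then for every j ∈ [p], (δ − 1)(n − δ/2) > [n, s_j, ℓ_j]. -/

import Mathlib

/-!
Write `S = s_j` and `L = ℓ_j`. Since `r ≤ L - 2`, the term `C(r,2)` is at most `r(L-2)/2`, and
eliminating `d` through `n = (S-1) + d(L-1) + r` gives `2[n,S,L] ≤ n(L-2) + (S-1)(S-L)`. So it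
suffices that `(S-1)(S-L) + δ(δ-1) < n(2δ-L)`. For `j = 1` we have `S = L = ℓ_1` and this is
exactly the second lower bound on `n`. For `j ≥ 2`, `L ≤ ℓ_1` and `ℓ_1 + L ≤ 2δ` give `L ≤ δ`;
together with `L ≤ S ≤ 2δ` the first bound `n > 3δ - 1` is enough.
-/

open SimpleGraph Finset

/-- `G` contains a copy of `H` (a subgraph isomorphic to `H`). -/
def ContainsCopy {V W : Type*} (H : SimpleGraph W) (G : SimpleGraph V) : Prop :=
  ∃ f : H →g G, Function.Injective f

/-- `G` is `H`-free: it contains no subgraph isomorphic to `H`. -/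
def IsFree {V W : Type*} (H : SimpleGraph W) (G : SimpleGraph V) : Prop :=
  ¬ ContainsCopy H G

/-- The Turán number `ex(n, H)`: the maximum number of edges of an `H`-free
graph on `n` vertices. -/
noncomputable def exNum {W : Type*} (n : ℕ) (H : SimpleGraph W) : ℕ :=
  sSup {m | ∃ G : SimpleGraph (Fin n), IsFree H G ∧ G.edgeSet.ncard = m}

/-- `G` is an extremal (`H`-free with `ex(n,H)` edges) graph on `n` vertices. -/
def IsExtremal {W : Type*} (n : ℕ) (H : SimpleGraph W) (G : SimpleGraph (Fin n)) : Prop :=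
  IsFree H G ∧ G.edgeSet.ncard = exNum n H

/-- Disjoint union of an indexed family of graphs. -/
def sigmaUnion {ι : Type*} {V : ι → Type*} (G : ∀ i, SimpleGraph (V i)) :
    SimpleGraph (Σ i, V i) where
  Adj x y := ∃ (i : ι) (u v : V i), (G i).Adj u v ∧ x = ⟨i, u⟩ ∧ y = ⟨i, v⟩
  symm := ⟨by
    rintro x y ⟨i, u, v, h, rfl, rfl⟩
    exact ⟨i, v, u, h.symm, rfl, rfl⟩⟩
  loopless := ⟨by
    rintro x ⟨i, u, v, h, rfl, he⟩
    simp only [Sigma.mk.inj_iff, heq_eq_eq, true_and] at he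
    exact (G i).irrefl (he ▸ h)⟩

/-- Disjoint union of two graphs on the sum type. -/
def dUnion {α β : Type*} (G : SimpleGraph α) (H : SimpleGraph β) :
    SimpleGraph (α ⊕ β) where
  Adj x y := Sum.LiftRel G.Adj H.Adj x y
  symm := ⟨by
    rintro x y (h | h)
    · exact Sum.LiftRel.inl h.symm
    · exact Sum.LiftRel.inr h.symm⟩
  loopless := ⟨by
    rintro x (h | h)
    · exact G.irrefl h
    · exact H.irrefl h⟩

/-- The join `G ∨ H` of two graphs: disjoint union plus all edges in between. -/
def joinG {α β : Type*} (G : SimpleGraph α) (H : SimpleGraph β) :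
    SimpleGraph (α ⊕ β) where
  Adj x y := match x, y with
    | .inl u, .inl v => G.Adj u v
    | .inr u, .inr v => H.Adj u v
    | .inl _, .inr _ => True
    | .inr _, .inl _ => True
  symm := ⟨by
    rintro (u | u) (v | v) h
    · exact h.symm
    · trivial
    · trivial
    · exact h.symm⟩
  loopless := ⟨by
    rintro (u | u) h
    · exact G.irrefl h
    · exact H.irrefl h⟩

/-- The star `S_a` with `a` edges (`a + 1` vertices), centered at `0`. -/
def starGraph (a : ℕ) : SimpleGraph (Fin (a + 1)) where
  Adj x y := x ≠ y ∧ (x = 0 ∨ y = 0)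
  symm := ⟨fun _ _ ⟨h1, h2⟩ => ⟨h1.symm, h2.symm⟩⟩
  loopless := ⟨fun _ h => h.1 rfl⟩

/-- The matching `M_k`: `(k/2) K_2` if `k` is even, `((k-1)/2) K_2 ∪ K_1` if `k` is odd. -/
def matchingGraph (k : ℕ) : SimpleGraph (Fin k) where
  Adj x y := x ≠ y ∧ (x : ℕ) / 2 = (y : ℕ) / 2
  symm := ⟨fun _ _ ⟨h1, h2⟩ => ⟨h1.symm, h2.symm⟩⟩
  loopless := ⟨fun _ h => h.1 rfl⟩

/-- `k` disjoint copies of the graph `G`. -/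
def kCopies {α : Type*} (k : ℕ) (G : SimpleGraph α) : SimpleGraph (Σ _ : Fin k, α) :=
  sigmaUnion fun _ => G

/-- The linear forest `⋃_{i=1}^p P_{ℓ i}`. -/
def pathForest (p : ℕ) (ℓ : Fin p → ℕ) : SimpleGraph (Σ i, Fin (ℓ i)) :=
  sigmaUnion fun i => pathGraph (ℓ i)

/-- The star forest `⋃_{j=1}^q S_{a j}`. -/
def starForest (q : ℕ) (a : Fin q → ℕ) : SimpleGraph (Σ j, Fin (a j + 1)) :=
  sigmaUnion fun j => starGraph (a j)

/-- The path-star forest `(⋃_{i=1}^p P_{ℓ i}) ∪ (⋃_{j=1}^q S_{a j})`. -/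
def pathStarForest (p q : ℕ) (ℓ : Fin p → ℕ) (a : Fin q → ℕ) :
    SimpleGraph ((Σ i, Fin (ℓ i)) ⊕ (Σ j, Fin (a j + 1))) :=
  dUnion (pathForest p ℓ) (starForest q a)

/-- `δ_F = Σ_i ⌊ℓ_i / 2⌋`. -/
def deltaF (p : ℕ) (ℓ : Fin p → ℕ) : ℕ := ∑ i, ℓ i / 2

/-- `μ_F = 1` if (`p = 1` and `ℓ_1` even) or (`p ≥ 2` and some `ℓ_i ≠ 3`), else `1/2`. -/
def muF (p : ℕ) (ℓ : Fin p → ℕ) : ℚ :=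
  if (p = 1 ∧ ∀ i, Even (ℓ i)) ∨ (2 ≤ p ∧ ∃ i, ℓ i ≠ 3) then 1 else 1/2

/-- `β_F = q + δ_F − μ_F`. -/
def betaF (p q : ℕ) (ℓ : Fin p → ℕ) : ℚ :=
  (q : ℚ) + (deltaF p ℓ : ℚ) - muF p ℓ

/-- `G_1(n,k) = K_k ∨ K̄_{n-k}`. -/
def g1 (n k : ℕ) : SimpleGraph (Fin k ⊕ Fin (n - k)) :=
  joinG (⊤ : SimpleGraph (Fin k)) (⊥ : SimpleGraph (Fin (n - k)))

/-- `G_1⁺(n,k) = K_k ∨ (K_2 ∪ K̄_{n-k-2})`. -/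
def g1plus (n k : ℕ) : SimpleGraph (Fin k ⊕ (Fin 2 ⊕ Fin (n - k - 2))) :=
  joinG (⊤ : SimpleGraph (Fin k))
    (dUnion (⊤ : SimpleGraph (Fin 2)) (⊥ : SimpleGraph (Fin (n - k - 2))))

/-- `G_2(n,k,ℓ) = K_k ∨ (d K_{ℓ-1} ∪ K_r)` where `n = k + d(ℓ-1) + r`. -/
def g2 (k d ℓ r : ℕ) :
    SimpleGraph (Fin k ⊕ ((Σ _ : Fin d, Fin (ℓ - 1)) ⊕ Fin r)) :=
  joinG (⊤ : SimpleGraph (Fin k))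
    (dUnion (kCopies d (⊤ : SimpleGraph (Fin (ℓ - 1)))) (⊤ : SimpleGraph (Fin r)))

/-- `G(s) = K_q ∨ ( (d-s-1) K_{ℓ-1} ∪ ( K_{(ℓ-2)/2} ∨ K̄_{ℓ/2 + s(ℓ-1) + r} ) )`. -/
def gS (q ℓ d r s : ℕ) :
    SimpleGraph (Fin q ⊕ ((Σ _ : Fin (d - s - 1), Fin (ℓ - 1)) ⊕
      (Fin ((ℓ - 2) / 2) ⊕ Fin (ℓ / 2 + s * (ℓ - 1) + r)))) :=
  joinG (⊤ : SimpleGraph (Fin q))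
    (dUnion (kCopies (d - s - 1) (⊤ : SimpleGraph (Fin (ℓ - 1))))
      (joinG (⊤ : SimpleGraph (Fin ((ℓ - 2) / 2)))
        (⊥ : SimpleGraph (Fin (ℓ / 2 + s * (ℓ - 1) + r)))))

section Field
variable {𝕜 : Type*} [Field 𝕜] [LinearOrder 𝕜] [IsStrictOrderedRing 𝕜]

theorem two_mul_choose_bracket_le {m d l r : ℕ} (hm : 1 ≤ m) (hr : r < l - 1) :
    2 * ((Nat.choose (m - 1) 2 + d * Nat.choose (l - 1) 2 + Nat.choose r 2 : ℕ) : 𝕜) ≤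
      ((m - 1 + d * (l - 1) + r : ℕ) : 𝕜) * (l - 2) + (m - 1) * (m - l) := by
  have hl : 1 ≤ l := by omega
  have hrl : (r : 𝕜) + 2 ≤ l := by exact_mod_cast (by omega : r + 2 ≤ l)
  push_cast [Nat.cast_choose_two, Nat.cast_sub hm, Nat.cast_sub hl]
  nlinarith [mul_nonneg r.cast_nonneg (by linarith : (0 : 𝕜) ≤ l - 1 - r)]

theorem sub_one_mul_sub_add_mul_sub_one_lt {δ s l n : 𝕜} (hl : 1 ≤ l) (hls : l ≤ s)
    (hs : s ≤ 2 * δ) (hlδ : l ≤ δ) (hn : 3 * δ - 1 < n) :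
    (s - 1) * (s - l) + δ * (δ - 1) < n * (2 * δ - l) := by
  nlinarith [mul_nonneg (sub_nonneg.2 hs) (by linarith : (0 : 𝕜) ≤ 2 * δ + s - 1 - l),
    mul_lt_mul_of_pos_right hn (by linarith : (0 : 𝕜) < 2 * δ - l),
    mul_nonneg (by linarith : (0 : 𝕜) ≤ δ) (by linarith : (0 : 𝕜) ≤ δ + 1 - l)]

theorem half_mul_one_add_div_lt_iff {δ l n : 𝕜} (h : l < 2 * δ) :
    δ / 2 * (1 + (l - 2) / (2 * δ - l)) < n ↔ δ * (δ - 1) < n * (2 * δ - l) := by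
  have hc : 0 < 2 * δ - l := by linarith
  rw [one_add_div hc.ne', ← mul_div_assoc, div_lt_iff₀ hc]
  constructor <;> intro h <;> linarith

end Field

theorem two_mul_sum_div_two {ι : Type*} (s : Finset ι) {f : ι → ℕ}
    (hf : ∀ i ∈ s, Even (f i)) :
    2 * ∑ i ∈ s, f i / 2 = ∑ i ∈ s, f i := by
  rw [mul_sum]
  exact sum_congr rfl fun i hi => Nat.two_mul_div_two_of_even (hf i hi)

theorem add_le_sum_of_ne {ι : Type*} [Fintype ι] [DecidableEq ι] (f : ι → ℕ) {i j : ι}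
    (h : i ≠ j) :
    f i + f j ≤ ∑ k, f k := by
  rw [← sum_pair h]
  exact sum_le_univ_sum_of_nonneg (fun _ => Nat.zero_le _)

theorem bracket_lt_lemma (p : ℕ) (ℓ : Fin p → ℕ) (hp : 2 ≤ p)
    (hmono : Antitone ℓ) (hℓ2 : ∀ i, 2 ≤ ℓ i) (heven : ∀ i, Even (ℓ i)) :
    let δ : ℕ := ∑ i, ℓ i / 2
    let ℓ₁ : ℕ := ℓ ⟨0, by omega⟩
    ∀ n : ℕ,
      max (3 * (δ : ℚ) - 1)
        ((δ : ℚ) / 2 * (1 + ((ℓ₁ : ℚ) - 2) / (2 * (δ : ℚ) - (ℓ₁ : ℚ)))) < (n : ℚ) →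
      ∀ j : Fin p, ∀ d r : ℕ,
        n = (∑ i ∈ Finset.univ.filter (· ≤ j), ℓ i) - 1 + d * (ℓ j - 1) + r →
        r < ℓ j - 1 →
        ((Nat.choose ((∑ i ∈ Finset.univ.filter (· ≤ j), ℓ i) - 1) 2 +
            d * Nat.choose (ℓ j - 1) 2 + Nat.choose r 2 : ℕ) : ℚ) <
          ((δ : ℚ) - 1) * ((n : ℚ) - (δ : ℚ) / 2) := by
  intro δ ℓ₁ n hn j d r hn_eq hr
  set S := ∑ i ∈ Finset.univ.filter (· ≤ j), ℓ i
  have hsum : ∑ i, ℓ i = 2 * δ := (two_mul_sum_div_two _ fun i _ => heven i).symm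
  have hjS : ℓ j ≤ S := single_le_sum (fun _ _ => Nat.zero_le _) (by simp)
  have hS : S ≤ 2 * δ := hsum ▸ sum_le_univ_sum_of_nonneg fun _ => Nat.zero_le _
  have hℓ₁ : ℓ₁ + 2 ≤ 2 * δ := by
    have := add_le_sum_of_ne ℓ (i := ⟨0, by omega⟩) (j := ⟨1, hp⟩) (by simp [Fin.ext_iff])
    have := hℓ2 ⟨1, hp⟩
    omega
  rw [max_lt_iff, half_mul_one_add_div_lt_iff (by exact_mod_cast (by omega : ℓ₁ < 2 * δ))] at hn
  have key : ((S : ℚ) - 1) * (S - ℓ j) + δ * (δ - 1) < n * (2 * δ - ℓ j) := by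
    rcases eq_or_ne j ⟨0, by omega⟩ with hj | hj
    · have hSj : S = ℓ j := by
        have : univ.filter (· ≤ j) = {j} := by ext i; simp [hj, Fin.le_def, Fin.ext_iff]
        simp only [S, this, sum_singleton]
      have hj₁ : ℓ j = ℓ₁ := by rw [hj]
      simpa [hSj, hj₁] using hn.2
    · have hjδ : ℓ j ≤ δ := by
        have := add_le_sum_of_ne ℓ hj.symm
        have := hmono (show ⟨0, by omega⟩ ≤ j from Nat.zero_le _)
        omega
      exact sub_one_mul_sub_add_mul_sub_one_lt (by exact_mod_cast (by omega : 1 ≤ ℓ j))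
        (by exact_mod_cast hjS) (by exact_mod_cast hS) (by exact_mod_cast hjδ) hn.1
  have hbr := two_mul_choose_bracket_le (𝕜 := ℚ) (d := d) (by omega : 1 ≤ S) hr
  rw [← hn_eq] at hbr
  linarith
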